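/- Let x_1,…,x_n (n ≥ 2) on the unit circle form an (n,ζ,δ,τ,η,T)-clustered configuration with clusters C_1,…,C_ζ of sizes ℓ_1,…,ℓ_ζ, and let α_1,…,α_n ∈ ℂ satisfy |α_j| ≥ 𝔪 > 0 for all j. Set ϱ = n(n−1)/2 − ∑_s ℓ_s(ℓ_s−1)/2. Fix j* belonging to the cluster C_μ (of size ℓ_μ) and let z ∈ ℂ satisfy |z − x_{j*}| = ρ with 0 < ρ < δ/3. Then the homogeneous Prony polynomial satisfies |p̄(z)| ≥ 𝔪^n · ρ · (δ − ρ)^{ℓ_μ−1} · (T − ρ)^{n−ℓ_μ} · T^{2ϱ} · δ^{n(n−1)−2ϱ}. -/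

import Mathlib

/-!
The Prony matrix factors as `A * V(z, x)` with `A` block diagonal with blocks `1` and
`V(x)ᵀ * diag α`; hence `p̄(z) = (∏ α_j) det V(x) det V(z, x)` and
`|p̄(z)| = ∏ |α_j| · ∏ |x_j - z| · |det V(x)|²`. Each factor is bounded separately: `|α_j| ≥ 𝔪`;
by the triangle inequality `|x_j - z|` equals `ρ` at `j*`, is at least `δ - ρ` on the rest of the
cluster of `j*` and at least `T - ρ` off it; and of the `n.choose 2` factors `|x_j - x_i|`, `i < j`,
of `|det V(x)|`, exactly `∑ ℓ_s.choose 2` are intra-cluster (`≥ δ`) and the other `ϱ` are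
inter-cluster (`≥ T`).
-/

open Matrix Finset

namespace Matrix

variable {R : Type*} [CommRing R] {n : ℕ}

theorem det_vandermonde_cons (z : R) (x : Fin n → R) :
    (vandermonde (Fin.cons z x : Fin (n + 1) → R)).det =
      (∏ j, (x j - z)) * (vandermonde x).det := by
  simp only [det_vandermonde, Fin.prod_univ_succ, Fin.prod_Ioi_zero, Fin.prod_Ioi_succ,
    Fin.cons_zero, Fin.cons_succ]

theorem det_vandermonde_eq_prod_lt (x : Fin n → R) :
    (vandermonde x).det = ∏ p : Fin n × Fin n with p.1 < p.2, (x p.2 - x p.1) := by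
  rw [det_vandermonde, prod_filter, Fintype.prod_prod_type]
  refine prod_congr rfl fun i _ => ?_
  rw [← prod_filter, filter_lt_eq_Ioi]

theorem det_homogeneous_prony (α x : Fin n → R) (z : R) :
    (of fun i k : Fin (n + 1) =>
        if (i : ℕ) = 0 then z ^ (k : ℕ) else ∑ j, α j * x j ^ ((i : ℕ) - 1 + (k : ℕ))).det =
      (∏ j, α j) * (vandermonde x).det * (vandermonde (Fin.cons z x)).det := by
  set A : Matrix (Fin (n + 1)) (Fin (n + 1)) R :=
    of (Fin.cons (Pi.single 0 1) fun i => Fin.cons 0 fun j => α j * x j ^ (i : ℕ))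
  have hA : A.det = (∏ j, α j) * (vandermonde x).det := by
    have hminor : A.submatrix Fin.succ Fin.succ = (vandermonde x)ᵀ * diagonal α := by
      ext i j
      simp [A, mul_comm]
    rw [det_succ_column_zero, Fin.sum_univ_succ, Fintype.sum_eq_zero]
    · simp [A, hminor, det_diagonal, mul_comm]
    · intro i
      simp [A]
  have hM : (of fun i k : Fin (n + 1) =>
        if (i : ℕ) = 0 then z ^ (k : ℕ) else ∑ j, α j * x j ^ ((i : ℕ) - 1 + (k : ℕ))) =
      A * vandermonde (Fin.cons z x) := by
    ext i k
    refine Fin.cases ?_ (fun i => ?_) i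
    · simp [A, mul_apply, Pi.single_apply, -vandermonde_cons]
    · simp [A, mul_apply, Fin.sum_univ_succ, pow_add, mul_assoc, -vandermonde_cons]
  rw [hM, det_mul, hA]

end Matrix

section ClusterBounds

variable {ι κ E : Type*}

theorem Finset.pow_card_filter_mul_pow_card_filter_not_le_prod {R : Type*} [CommSemiring R]
    [PartialOrder R] [IsOrderedRing R] (s : Finset ι) (p : ι → Prop) [DecidablePred p]
    {f : ι → R} {a b : R} (ha : 0 ≤ a) (hb : 0 ≤ b)
    (hfa : ∀ i ∈ s, p i → a ≤ f i) (hfb : ∀ i ∈ s, ¬p i → b ≤ f i) :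
    a ^ #{i ∈ s | p i} * b ^ #{i ∈ s | ¬p i} ≤ ∏ i ∈ s, f i := by
  have hbound : ∀ (t : Finset ι) (c : R), 0 ≤ c → (∀ i ∈ t, c ≤ f i) → c ^ #t ≤ ∏ i ∈ t, f i :=
    fun t c hc hcf => by
      rw [← prod_const]
      exact prod_le_prod (fun _ _ => hc) hcf
  have hfa' := hbound _ _ ha fun i hi => hfa i (mem_filter.1 hi).1 (mem_filter.1 hi).2
  have hfb' := hbound _ _ hb fun i hi => hfb i (mem_filter.1 hi).1 (mem_filter.1 hi).2
  rw [← prod_filter_mul_prod_filter_not s p]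
  exact mul_le_mul hfa' hfb' (by positivity) ((pow_nonneg ha _).trans hfa')

variable [SeminormedAddCommGroup E] [DecidableEq κ] (x : ι → E) (cl : ι → κ) {δ T : ℝ}

theorem pow_mul_pow_le_prod_norm_sub_of_cluster (s : Finset (ι × ι)) (hs : ∀ p ∈ s, p.1 ≠ p.2)
    (hδ : 0 ≤ δ) (hT : 0 ≤ T) (hintra : ∀ i j, i ≠ j → cl i = cl j → δ ≤ ‖x i - x j‖)
    (hinter : ∀ i j, cl i ≠ cl j → T ≤ ‖x i - x j‖) :
    δ ^ #{p ∈ s | cl p.1 = cl p.2} * T ^ #{p ∈ s | ¬cl p.1 = cl p.2} ≤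
      ∏ p ∈ s, ‖x p.2 - x p.1‖ :=
  pow_card_filter_mul_pow_card_filter_not_le_prod s _ hδ hT
    (fun p hp hcl => hintra _ _ (hs p hp).symm hcl.symm)
    (fun _ _ hcl => hinter _ _ (Ne.symm hcl))

theorem mul_pow_mul_pow_le_prod_norm_sub_of_cluster [Fintype ι] {j₀ : ι} {z : E}
    {ρ : ℝ} (hρ : 0 ≤ ρ) (hρδ : ρ ≤ δ) (hρT : ρ ≤ T) (hz : ‖z - x j₀‖ = ρ)
    (hintra : ∀ j, j ≠ j₀ → cl j = cl j₀ → δ ≤ ‖x j - x j₀‖)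
    (hinter : ∀ j, cl j ≠ cl j₀ → T ≤ ‖x j - x j₀‖) :
    ρ * (δ - ρ) ^ (#{j | cl j = cl j₀} - 1) * (T - ρ) ^ (Fintype.card ι - #{j | cl j = cl j₀}) ≤
      ∏ j, ‖x j - z‖ := by
  classical
  have hdist : ∀ j, ‖x j - x j₀‖ - ρ ≤ ‖x j - z‖ := fun j => by
    linarith [norm_sub_le_norm_sub_add_norm_sub (x j) z (x j₀)]
  have hcard_same : #{j ∈ univ.erase j₀ | cl j = cl j₀} = #{j | cl j = cl j₀} - 1 := by
    rw [filter_erase, card_erase_of_mem (by simp)]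
  have hcard_other :
      #{j ∈ univ.erase j₀ | ¬cl j = cl j₀} = Fintype.card ι - #{j | cl j = cl j₀} := by
    have := card_filter_add_card_filter_not (s := univ) fun j => cl j = cl j₀
    rw [filter_erase, erase_eq_of_notMem (by simp), ← card_univ]
    omega
  rw [← mul_prod_erase univ _ (mem_univ j₀), norm_sub_rev, hz, mul_assoc, ← hcard_same,
    ← hcard_other]
  gcongr
  exact pow_card_filter_mul_pow_card_filter_not_le_prod _ _ (by linarith) (by linarith)
    (fun j hj hcl => by linarith [hdist j, hintra j (ne_of_mem_erase hj) hcl])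
    (fun j _ hcl => by linarith [hdist j, hinter j hcl])

variable [LinearOrder ι] [Fintype ι] [Fintype κ]

theorem card_filter_lt_filter_eq_sum_choose_two :
    #{p ∈ ({p : ι × ι | p.1 < p.2} : Finset _) | cl p.1 = cl p.2} =
      ∑ s, (#{i | cl i = s}).choose 2 := by
  rw [card_eq_sum_card_fiberwise (f := fun p => cl p.1) (t := univ) fun _ _ => mem_univ _]
  refine sum_congr rfl fun s _ => ?_
  rw [← card_product_filter_lt]
  congr 1
  ext p
  simp only [mem_filter, mem_univ, true_and, mem_product]
  constructor
  · rintro ⟨⟨hlt, hcl⟩, rfl⟩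
    exact ⟨⟨rfl, hcl.symm⟩, hlt⟩
  · rintro ⟨⟨h1, h2⟩, hlt⟩
    exact ⟨⟨hlt, h1.trans h2.symm⟩, h1⟩

theorem sum_choose_two_card_filter_le_choose_two :
    ∑ s, (#{i | cl i = s}).choose 2 ≤ (Fintype.card ι).choose 2 := by
  rw [← card_filter_lt_filter_eq_sum_choose_two, ← Fintype.card_product_filter_lt]
  exact card_filter_le _ _

end ClusterBounds

theorem pow_mul_pow_le_norm_det_vandermonde {K κ : Type*} [NormedField K] [Fintype κ]
    [DecidableEq κ] {n : ℕ} (x : Fin n → K) (cl : Fin n → κ) {δ T : ℝ} (hδ : 0 ≤ δ) (hT : 0 ≤ T)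
    (hintra : ∀ i j, i ≠ j → cl i = cl j → δ ≤ ‖x i - x j‖)
    (hinter : ∀ i j, cl i ≠ cl j → T ≤ ‖x i - x j‖) :
    δ ^ (∑ s, (#{i | cl i = s}).choose 2) * T ^ (n.choose 2 - ∑ s, (#{i | cl i = s}).choose 2) ≤
      ‖(vandermonde x).det‖ := by
  have hpairs := card_filter_add_card_filter_not
    (s := ({p : Fin n × Fin n | p.1 < p.2} : Finset _)) fun p => cl p.1 = cl p.2
  rw [Fintype.card_product_filter_lt, Fintype.card_fin] at hpairs
  rw [det_vandermonde_eq_prod_lt, norm_prod, ← card_filter_lt_filter_eq_sum_choose_two, ← hpairs,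
    Nat.add_sub_cancel_left]
  exact pow_mul_pow_le_prod_norm_sub_of_cluster x cl _ (fun p hp => (mem_filter.1 hp).2.ne)
    hδ hT hintra hinter

theorem prony_homogeneous_poly_lower_bound_general
    (n ζ : ℕ)
    (ℓ : Fin ζ → ℕ)
    (δ τ η T : ℝ) (hδ : 0 < δ) (hτ : 1 < τ)
    (hT : 0 < T) (hτδT : τ * δ < T)
    (x : Fin n → ℂ) (cl : Fin n → Fin ζ) (α : Fin n → ℂ) (mA : ℝ)
    (hintra : ∀ i j, i ≠ j → cl i = cl j →
      δ ≤ ‖x i - x j‖ ∧ ‖x i - x j‖ ≤ τ * δ)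
    (hinter : ∀ i j, cl i ≠ cl j →
      T ≤ ‖x i - x j‖ ∧ ‖x i - x j‖ ≤ η * T)
    (hcard : ∀ s, (Finset.univ.filter fun j => cl j = s).card = ℓ s)
    (hmA : 0 < mA) (hα : ∀ j, mA ≤ ‖α j‖)
    (ϱ : ℕ) (hϱ : ϱ = n * (n - 1) / 2 - ∑ s, ℓ s * (ℓ s - 1) / 2)
    (jstar : Fin n) (z : ℂ) (ρ : ℝ)
    (hρ0 : 0 < ρ) (hρ1 : ρ < δ / 3)
    (hz : ‖z - x jstar‖ = ρ) :
    mA ^ n * ρ * (δ - ρ) ^ (ℓ (cl jstar) - 1) * (T - ρ) ^ (n - ℓ (cl jstar)) *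
        T ^ (2 * ϱ) * δ ^ (n * (n - 1) - 2 * ϱ) ≤
      ‖Matrix.det (Matrix.of fun i k : Fin (n + 1) =>
        if (i : ℕ) = 0 then z ^ (k : ℕ)
        else ∑ j, α j * x j ^ ((i : ℕ) - 1 + (k : ℕ)))‖ := by
  have hρT : ρ < T := by nlinarith
  set a := ∑ s, (ℓ s).choose 2
  have ha : a ≤ n.choose 2 := by
    simpa only [a, hcard, Fintype.card_fin] using sum_choose_two_card_filter_le_choose_two cl
  have hϱ' : ϱ = n.choose 2 - a := by simp only [hϱ, a, Nat.choose_two_right]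
  have hexp : n * (n - 1) - 2 * ϱ = 2 * a := by
    have := Nat.two_mul_div_two_of_even n.even_mul_pred_self
    rw [← Nat.choose_two_right] at this
    omega
  have hamplitudes : mA ^ n ≤ ∏ j, ‖α j‖ := by
    simpa using Finset.prod_le_prod (s := univ) (fun _ _ => hmA.le) (fun j _ => hα j)
  have hnodes : ρ * (δ - ρ) ^ (ℓ (cl jstar) - 1) * (T - ρ) ^ (n - ℓ (cl jstar)) ≤
      ∏ j, ‖x j - z‖ := by
    simpa only [hcard, Fintype.card_fin] using
      mul_pow_mul_pow_le_prod_norm_sub_of_cluster x cl hρ0.le (by linarith) hρT.le hz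
        (fun j hj hcl => (hintra j jstar hj hcl).1) (fun j hcl => (hinter j jstar hcl).1)
  have hvandermonde : δ ^ a * T ^ ϱ ≤ ‖(vandermonde x).det‖ := by
    simpa only [a, hϱ', hcard] using
      pow_mul_pow_le_norm_det_vandermonde x cl hδ.le hT.le
        (fun i j hij hcl => (hintra i j hij hcl).1) (fun i j hcl => (hinter i j hcl).1)
  rw [det_homogeneous_prony, det_vandermonde_cons, norm_mul, norm_mul, norm_mul, norm_prod,
    norm_prod, hexp]
  calc mA ^ n * ρ * (δ - ρ) ^ (ℓ (cl jstar) - 1) * (T - ρ) ^ (n - ℓ (cl jstar)) *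
        T ^ (2 * ϱ) * δ ^ (2 * a)
      = mA ^ n * (ρ * (δ - ρ) ^ (ℓ (cl jstar) - 1) * (T - ρ) ^ (n - ℓ (cl jstar))) *
          (δ ^ a * T ^ ϱ) ^ 2 := by ring
    _ ≤ (∏ j, ‖α j‖) * (∏ j, ‖x j - z‖) * ‖(vandermonde x).det‖ ^ 2 := by
        have hδρ : 0 ≤ δ - ρ := by linarith
        have hTρ : 0 ≤ T - ρ := by linarith
        gcongr
    _ = _ := by ring

/-- Lower bound on the homogeneous Prony polynomial near a cluster node (inequality
(5.5)–(5.6)): for `z` at distance `ρ < δ/3` from a node `x_{j*}` of a cluster of size `ℓ_μ`,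
`|p̄(z)| ≥ 𝔪^n ρ (δ-ρ)^{ℓ_μ-1} (T-ρ)^{n-ℓ_μ} T^{2ϱ} δ^{n(n-1)-2ϱ}`. -/
theorem prony_homogeneous_poly_lower_bound
    (n ζ : ℕ) (hn : 2 ≤ n) (hζ : 1 ≤ ζ)
    (ℓ : Fin ζ → ℕ) (hℓ : ∀ s, 1 ≤ ℓ s) (hsum : ∑ s, ℓ s = n)
    (lstar : ℕ) (hlstar : lstar = Finset.univ.sup ℓ)
    (δ τ η T : ℝ) (hδ : 0 < δ) (hδ1 : δ < 1) (hτ : 1 < τ) (hη : 1 < η)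
    (hT : 0 < T) (hτδT : τ * δ < T)
    (x : Fin n → ℂ) (cl : Fin n → Fin ζ) (α : Fin n → ℂ) (mA : ℝ)
    (hcirc : ∀ j, ‖x j‖ = 1)
    (hinj : Function.Injective x)
    (hintra : ∀ i j, i ≠ j → cl i = cl j →
      δ ≤ ‖x i - x j‖ ∧ ‖x i - x j‖ ≤ τ * δ)
    (hinter : ∀ i j, cl i ≠ cl j →
      T ≤ ‖x i - x j‖ ∧ ‖x i - x j‖ ≤ η * T)
    (hcard : ∀ s, (Finset.univ.filter fun j => cl j = s).card = ℓ s)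
    (hmA : 0 < mA) (hα : ∀ j, mA ≤ ‖α j‖)
    (ϱ : ℕ) (hϱ : ϱ = n * (n - 1) / 2 - ∑ s, ℓ s * (ℓ s - 1) / 2)
    (jstar : Fin n) (z : ℂ) (ρ : ℝ)
    (hρ0 : 0 < ρ) (hρ1 : ρ < δ / 3)
    (hz : ‖z - x jstar‖ = ρ) :
    mA ^ n * ρ * (δ - ρ) ^ (ℓ (cl jstar) - 1) * (T - ρ) ^ (n - ℓ (cl jstar)) *
        T ^ (2 * ϱ) * δ ^ (n * (n - 1) - 2 * ϱ) ≤
      ‖Matrix.det (Matrix.of fun i k : Fin (n + 1) =>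
        if (i : ℕ) = 0 then z ^ (k : ℕ)
        else ∑ j, α j * x j ^ ((i : ℕ) - 1 + (k : ℕ)))‖ :=
  prony_homogeneous_poly_lower_bound_general n ζ ℓ δ τ η T hδ hτ hT hτδT x cl α mA hintra hinter
    hcard hmA hα ϱ hϱ jstar z ρ hρ0 hρ1 hz
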